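/- For every real z > 0, lim_{N→∞} ( Σ_{n=1}^N 1/(2nz) - ∫_0^N ( ψ(tz + 1) - log(tz) ) dt ) = (γ - log(2πz))/(2z), where γ is Euler's constant. -/

import Mathlib

open Real MeasureTheory Filter intervalIntegral

/-- The digamma function `ψ = Γ'/Γ`. -/
noncomputable def digamma (x : ℝ) : ℝ := deriv Real.Gamma x / Real.Gamma x

/-!
Since `ψ = (log Γ)'`, the substitution `u = t z` evaluates the integral as
`(log Γ(Nz + 1) - Nz log(Nz) + Nz) / z`, while the sum is `H_N / (2z)`. Stirling's formula
`log Γ(x + 1) = (x + 1/2) log x - x + log(2π)/2 + o(1)` for real `x → ∞` (the factorial version,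
interpolated between consecutive integers by the log-convexity of `Γ`) turns the difference into
`(H_N - log N - log z - log 2π) / (2z) + o(1)`, and `H_N - log N → γ`.
-/

open Set Topology

lemma hasDerivAt_log_Gamma {x : ℝ} (hx : 0 < x) : HasDerivAt (log ∘ Gamma) (digamma x) x :=
  (differentiableOn_Gamma_Ioi.differentiableAt (Ioi_mem_nhds hx)).hasDerivAt.log
    (Gamma_pos_of_pos hx).ne'

lemma monotoneOn_digamma : MonotoneOn digamma (Ioi 0) :=
  (convexOn_log_Gamma.monotoneOn_deriv fun _ hx ↦ (hasDerivAt_log_Gamma hx).differentiableAt).congr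
    fun _ hx ↦ (hasDerivAt_log_Gamma hx).deriv

lemma uIcc_subset_Ioi_zero {a b : ℝ} (ha : 0 < a) (hb : 0 < b) : uIcc a b ⊆ Ioi 0 :=
  fun _ hx ↦ (lt_min ha hb).trans_le hx.1

lemma intervalIntegrable_digamma {a b : ℝ} (ha : 0 < a) (hb : 0 < b) :
    IntervalIntegrable digamma volume a b :=
  (monotoneOn_digamma.mono (uIcc_subset_Ioi_zero ha hb)).intervalIntegrable

lemma integral_digamma {a b : ℝ} (ha : 0 < a) (hb : 0 < b) :
    ∫ x in a..b, digamma x = log (Gamma b) - log (Gamma a) :=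
  integral_eq_sub_of_hasDerivAt (fun _ hx ↦ hasDerivAt_log_Gamma (uIcc_subset_Ioi_zero ha hb hx))
    (intervalIntegrable_digamma ha hb)

noncomputable def stirlingRemainder (x : ℝ) : ℝ :=
  log (Gamma (x + 1)) - ((x + 1 / 2) * log x - x)

lemma stirlingRemainder_natCast {n : ℕ} (hn : n ≠ 0) :
    stirlingRemainder n = log (Stirling.stirlingSeq n) + log 2 / 2 := by
  have hn' : (n : ℝ) ≠ 0 := Nat.cast_ne_zero.2 hn
  rw [stirlingRemainder, Stirling.log_stirlingSeq_formula, Gamma_nat_eq_factorial,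
    log_mul two_ne_zero hn', log_div hn' (exp_ne_zero 1), log_exp]
  ring

lemma tendsto_stirlingRemainder_natCast :
    Tendsto (fun n : ℕ ↦ stirlingRemainder n) atTop (𝓝 (log (2 * π) / 2)) := by
  have hπ : log (2 * π) / 2 = log √π + log 2 / 2 := by
    rw [log_sqrt pi_pos.le, log_mul two_ne_zero pi_pos.ne']
    ring
  rw [hπ]
  refine (((continuousAt_log (sqrt_pos.2 pi_pos).ne').tendsto.comp
    Stirling.tendsto_stirlingSeq_sqrt_pi).add_const _).congr' ?_
  filter_upwards [eventually_ne_atTop 0] with n hn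
  exact (stirlingRemainder_natCast hn).symm

lemma log_Gamma_add_one {y : ℝ} (hy : 0 < y) :
    (log ∘ Gamma) (y + 1) = (log ∘ Gamma) y + log y := by
  simp only [Function.comp_apply, Gamma_add_one hy.ne', log_mul hy.ne' (Gamma_pos_of_pos hy).ne']
  ring

lemma log_Gamma_nat_add_mem_Icc {n : ℕ} (hn : n ≠ 0) {θ : ℝ} (hθ₀ : 0 ≤ θ) (hθ₁ : θ ≤ 1) :
    log (Gamma (n + θ + 1)) - log (Gamma (n + 1)) ∈ Icc (θ * log n) (θ * log (n + 1)) := by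
  rcases hθ₀.eq_or_lt with rfl | hθ
  · simp
  have hlow := BohrMollerup.f_add_nat_ge convexOn_log_Gamma log_Gamma_add_one (n := n + 1)
    (by omega) hθ
  have hupp := BohrMollerup.f_add_nat_le convexOn_log_Gamma log_Gamma_add_one (n := n + 1)
    (by omega) hθ hθ₁
  simp only [Function.comp_apply, Nat.cast_add_one, add_sub_cancel_right] at hlow hupp
  rw [add_right_comm] at hlow hupp
  constructor <;> linarith

lemma log_sub_log_le_div {a b : ℝ} (ha : 0 < a) (hb : 0 < b) : log b - log a ≤ (b - a) / a := by
  rw [← log_div hb.ne' ha.ne']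
  exact (log_le_sub_one_of_pos (div_pos hb ha)).trans_eq (by field_simp)

lemma div_le_log_sub_log {a b : ℝ} (ha : 0 < a) (hb : 0 < b) : (b - a) / b ≤ log b - log a := by
  rw [← log_div hb.ne' ha.ne']
  exact (one_sub_inv_le_log_of_pos (div_pos hb ha)).trans_eq' (by field_simp)

lemma abs_stirlingRemainder_nat_add_sub_le {n : ℕ} (hn : n ≠ 0) {θ : ℝ} (hθ₀ : 0 ≤ θ)
    (hθ₁ : θ ≤ 1) : |stirlingRemainder (n + θ) - stirlingRemainder n| ≤ 2 / n := by
  set x : ℝ := n + θ with hx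
  have hn₀ : (0 : ℝ) < n := Nat.cast_pos.2 (Nat.pos_of_ne_zero hn)
  have hx₀ : 0 < x := by positivity
  obtain ⟨hΓlow, hΓupp⟩ := log_Gamma_nat_add_mem_Icc hn hθ₀ hθ₁
  have hxn : x - n = θ := add_sub_cancel_left _ _
  have hlog_upp : log x - log n ≤ θ / n := hxn ▸ log_sub_log_le_div hn₀ hx₀
  have hlog_low : θ / x ≤ log x - log n := hxn ▸ div_le_log_sub_log hn₀ hx₀
  have hlog_succ : log (n + 1) - log n ≤ 1 / n := by
    simpa using log_sub_log_le_div hn₀ (by positivity : (0 : ℝ) < n + 1)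
  have hv_upp : (x + 1 / 2) * (log x - log n) ≤ θ + θ * (θ + 1 / 2) / n := by
    calc (x + 1 / 2) * (log x - log n) ≤ (x + 1 / 2) * (θ / n) := by gcongr
      _ = θ + θ * (θ + 1 / 2) / n := by field_simp; ring
  have hv_low : θ ≤ (x + 1 / 2) * (log x - log n) := by
    calc θ ≤ θ + θ / (2 * x) := le_add_of_nonneg_right (by positivity)
      _ = (x + 1 / 2) * (θ / x) := by field_simp
      _ ≤ (x + 1 / 2) * (log x - log n) := by gcongr
  have hsq : θ * (θ + 1 / 2) / n ≤ 2 / n := by gcongr; nlinarith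
  have hsucc : θ * (log (n + 1) - log n) ≤ 2 / n := by
    calc θ * (log (n + 1) - log n) ≤ 1 * (1 / n) := by
          gcongr
          exact sub_nonneg.2 (log_le_log hn₀ (by linarith))
      _ ≤ 2 / n := by rw [one_mul]; gcongr; norm_num
  have hdiff : stirlingRemainder x - stirlingRemainder n
      = (log (Gamma (x + 1)) - log (Gamma (n + 1)) - θ * log n)
        - (x + 1 / 2) * (log x - log n) + θ := by
    rw [stirlingRemainder, stirlingRemainder, hx]
    ring
  rw [hdiff, abs_le]
  constructor <;> linarith

lemma tendsto_stirlingRemainder :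
    Tendsto stirlingRemainder atTop (𝓝 (log (2 * π) / 2)) := by
  have hfloor := tendsto_stirlingRemainder_natCast.comp (tendsto_nat_floor_atTop (α := ℝ))
  have hbound : Tendsto (fun x : ℝ ↦ 2 / (⌊x⌋₊ : ℝ)) atTop (𝓝 0) :=
    (tendsto_const_nhds.div_atTop tendsto_natCast_atTop_atTop).comp tendsto_nat_floor_atTop
  have hgap : Tendsto (fun x ↦ stirlingRemainder x - stirlingRemainder ⌊x⌋₊) atTop (𝓝 0) := by
    refine squeeze_zero_norm' ?_ hbound
    filter_upwards [eventually_ge_atTop 1] with x hx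
    have hfl : ⌊x⌋₊ ≠ 0 := (Nat.floor_pos.2 hx).ne'
    simpa using abs_stirlingRemainder_nat_add_sub_le hfl (sub_nonneg.2 (Nat.floor_le (by linarith)))
      (sub_le_iff_le_add'.2 (Nat.lt_floor_add_one x).le)
  simpa using hgap.add hfloor

lemma integral_digamma_add_one_sub_log {X : ℝ} (hX : 0 ≤ X) :
    ∫ u in (0 : ℝ)..X, (digamma (u + 1) - log u) = stirlingRemainder X + log X / 2 := by
  have hψ : IntervalIntegrable (fun u ↦ digamma (u + 1)) volume 0 X := by
    simpa using (intervalIntegrable_digamma one_pos (by linarith : 0 < X + 1)).comp_add_right 1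
  rw [integral_sub hψ intervalIntegrable_log', integral_comp_add_right,
    integral_digamma (by norm_num) (by linarith), integral_log, stirlingRemainder]
  simp
  ring

lemma integral_digamma_mul_add_one_sub_log {z : ℝ} (hz : 0 < z) {b : ℝ} (hb : 0 ≤ b) :
    ∫ t in (0 : ℝ)..b, (digamma (t * z + 1) - log (t * z))
      = (stirlingRemainder (b * z) + log (b * z) / 2) / z := by
  have := integral_comp_mul_right (fun u ↦ digamma (u + 1) - log u) hz.ne' (a := 0) (b := b)
  rw [this, zero_mul, integral_digamma_add_one_sub_log (by positivity), smul_eq_mul,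
    inv_mul_eq_div]

lemma sum_Icc_one_div_two_mul_mul (z : ℝ) (N : ℕ) :
    ∑ n ∈ Finset.Icc 1 N, 1 / (2 * (n : ℝ) * z) = harmonic N / (2 * z) := by
  rw [harmonic_eq_sum_Icc]
  push_cast
  rw [Finset.sum_div]
  refine Finset.sum_congr rfl fun n _ ↦ ?_
  field_simp

theorem limit_sum_sub_integral (z : ℝ) (hz : 0 < z) :
    Tendsto (fun N : ℕ =>
        (∑ n ∈ Finset.Icc 1 N, 1 / (2 * (n : ℝ) * z))
          - ∫ t in (0 : ℝ)..(N : ℝ), (digamma (t * z + 1) - Real.log (t * z)))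
      atTop (nhds ((Real.eulerMascheroniConstant - Real.log (2 * π * z)) / (2 * z))) := by
  have hNz : Tendsto (fun N : ℕ ↦ (N : ℝ) * z) atTop atTop :=
    tendsto_natCast_atTop_atTop.atTop_mul_const hz
  have hlim := ((tendsto_harmonic_sub_log.sub_const (log z)).sub
    ((tendsto_stirlingRemainder.comp hNz).const_mul 2)).div_const (2 * z)
  have hval : (eulerMascheroniConstant - log z - 2 * (log (2 * π) / 2)) / (2 * z)
      = (eulerMascheroniConstant - log (2 * π * z)) / (2 * z) := by
    rw [log_mul (by positivity) hz.ne']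
    ring
  rw [← hval]
  refine hlim.congr' ?_
  filter_upwards [eventually_ne_atTop 0] with N hN
  rw [sum_Icc_one_div_two_mul_mul, integral_digamma_mul_add_one_sub_log hz N.cast_nonneg,
    log_mul (Nat.cast_ne_zero.2 hN) hz.ne', Function.comp_apply]
  field_simp
  ring
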